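/- Let f = Σ_{k≥1} (a_k cos(kt) + b_k sin(kt)) be a smooth vector field on the circle with mean zero, and let J(f) = Σ_{k≥1} (b_k cos(kt) - a_k sin(kt)). Then ω_{c,h}(f, Jf) = (1/2) Σ_{k≥1} θ_k (a_k² + b_k²) where θ_k = 2hk + (c/12)(k³ - k). In particular, if h > 0 and c ≥ 0, then B(f,g) := ω_{c,h}(f, Jg) defines a positive definite inner product on the mean-zero vector fields. -/

import Mathlib

/-!
On the `k`-th Fourier mode differentiation acts as `k J`, hence `∂³` as `-k³ J` and
`(2h - c/12) ∂ - (c/12) ∂³` as `θ_k J`. Thus `ω_{c,h}(f, Jf)` pairs the modes of `Jf`, weighted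
by `θ_k`, against those of `Jf` itself, and the orthogonality of the modes on `[0, 2π]` leaves
`(1/2) Σ θ_k (a_k² + b_k²)`. Positivity follows since `θ_k > 0` for `k ≥ 1` when `h > 0`, `c ≥ 0`.
-/

open Real

/-- `ω_{c,h}(f,g) = ∫_0^{2π} ((2h - c/12) f'(t) - (c/12) f'''(t)) g(t) dt/(2π)` -/
noncomputable def om (c h : ℝ) (f g : ℝ → ℝ) : ℝ :=
  ∫ t in (0:ℝ)..(2 * π), ((2 * h - c / 12) * deriv f t - c / 12 * deriv^[3] f t) * g t / (2 * π)

/-- `θ_k = 2hk + (c/12)(k³ - k)` -/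
noncomputable def th (c h : ℝ) (k : ℤ) : ℝ := 2 * h * k + c / 12 * ((k : ℝ) ^ 3 - k)

section TrigPoly

open intervalIntegral Finset

theorem integral_cos_int_mul (m : ℤ) :
    ∫ t in (0 : ℝ)..2 * π, cos (m * t) = if m = 0 then 2 * π else 0 := by
  split_ifs with hm
  · simp [hm]
  · rw [integral_comp_mul_left (fun x => cos x) (Int.cast_ne_zero.2 hm), integral_cos]
    simpa [mul_left_comm, mul_assoc] using Or.inr (sin_int_mul_pi (2 * m))

theorem integral_sin_int_mul (m : ℤ) : ∫ t in (0 : ℝ)..2 * π, sin (m * t) = 0 := by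
  rcases eq_or_ne m 0 with rfl | hm
  · simp
  · rw [integral_comp_mul_left (fun x => sin x) (Int.cast_ne_zero.2 hm), integral_sin]
    simp [cos_int_mul_two_pi]

theorem integral_mode_mul_mode {k : ℕ} (hk : 1 ≤ k) (l : ℕ) (p q r s : ℝ) :
    ∫ t in (0 : ℝ)..2 * π,
        (p * cos (k * t) + q * sin (k * t)) * (r * cos (l * t) + s * sin (l * t))
      = if k = l then π * (p * r + q * s) else 0 := by
  have product_to_sum : ∀ t : ℝ,
      (p * cos (k * t) + q * sin (k * t)) * (r * cos (l * t) + s * sin (l * t))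
        = (p * r + q * s) / 2 * cos (((k - l : ℤ) : ℝ) * t)
          + (p * r - q * s) / 2 * cos (((k + l : ℤ) : ℝ) * t)
          + (q * r - p * s) / 2 * sin (((k - l : ℤ) : ℝ) * t)
          + (p * s + q * r) / 2 * sin (((k + l : ℤ) : ℝ) * t) := fun t => by
    push_cast
    simp only [sub_mul, add_mul, cos_sub, cos_add, sin_sub, sin_add]
    ring
  have hcos (e : ℝ) (m : ℤ) :
      IntervalIntegrable (fun t => e * cos (m * t)) MeasureTheory.volume 0 (2 * π) :=
    (by fun_prop : Continuous _).intervalIntegrable _ _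
  have hsin (e : ℝ) (m : ℤ) :
      IntervalIntegrable (fun t => e * sin (m * t)) MeasureTheory.volume 0 (2 * π) :=
    (by fun_prop : Continuous _).intervalIntegrable _ _
  simp only [product_to_sum]
  rw [integral_add (((hcos _ _).add (hcos _ _)).add (hsin _ _)) (hsin _ _),
    integral_add ((hcos _ _).add (hcos _ _)) (hsin _ _), integral_add (hcos _ _) (hcos _ _),
    integral_const_mul, integral_const_mul, integral_const_mul, integral_const_mul,
    integral_cos_int_mul, integral_cos_int_mul, integral_sin_int_mul, integral_sin_int_mul]
  have hsum : (k + l : ℤ) ≠ 0 := by omega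
  by_cases hkl : k = l
  · subst hkl
    simp only [sub_self, ↓reduceIte, hsum, mul_zero, add_zero]
    ring
  · have hdiff : (k - l : ℤ) ≠ 0 := by omega
    simp [hkl, hsum, hdiff]

noncomputable def trigPoly (N : ℕ) (A B : ℕ → ℝ) (t : ℝ) : ℝ :=
  ∑ k ∈ Icc 1 N, (A k * cos (k * t) + B k * sin (k * t))

theorem integral_trigPoly_mul_trigPoly (N : ℕ) (A B C D : ℕ → ℝ) :
    ∫ t in (0 : ℝ)..2 * π, trigPoly N A B t * trigPoly N C D t
      = π * ∑ k ∈ Icc 1 N, (A k * C k + B k * D k) := by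
  have hmode (k l : ℕ) : Continuous fun t : ℝ =>
      (A k * cos (k * t) + B k * sin (k * t)) * (C l * cos (l * t) + D l * sin (l * t)) := by
    fun_prop
  simp only [trigPoly, sum_mul_sum]
  rw [integral_finsetSum fun k _ =>
      (continuous_finsetSum _ fun l _ => hmode k l).intervalIntegrable _ _, mul_sum]
  refine sum_congr rfl fun k hk => ?_
  rw [integral_finsetSum fun l _ => (hmode k l).intervalIntegrable _ _]
  simp only [integral_mode_mul_mode (mem_Icc.1 hk).1, sum_ite_eq, if_pos hk]

theorem hasDerivAt_trigPoly (N : ℕ) (A B : ℕ → ℝ) (t : ℝ) :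
    HasDerivAt (trigPoly N A B) (trigPoly N (fun k => k * B k) (fun k => -(k * A k)) t) t := by
  refine HasDerivAt.fun_sum fun k _ => ?_
  have hlin : HasDerivAt (fun t : ℝ => (k : ℝ) * t) k t := by
    simpa using (hasDerivAt_id t).const_mul (k : ℝ)
  convert (((hasDerivAt_cos _).comp t hlin).const_mul (A k)).fun_add
    (((hasDerivAt_sin _).comp t hlin).const_mul (B k)) using 1
  · rfl
  · ring

theorem deriv_trigPoly (N : ℕ) (A B : ℕ → ℝ) :
    deriv (trigPoly N A B) = trigPoly N (fun k => k * B k) (fun k => -(k * A k)) :=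
  funext fun t => (hasDerivAt_trigPoly N A B t).deriv

theorem iterate_deriv_three_trigPoly (N : ℕ) (A B : ℕ → ℝ) :
    deriv^[3] (trigPoly N A B) = trigPoly N (fun k => -(k ^ 3 * B k)) (fun k => k ^ 3 * A k) := by
  simp only [Function.iterate_succ, Function.iterate_zero, Function.comp_apply, id_eq,
    deriv_trigPoly]
  ext t
  simp only [trigPoly]
  exact sum_congr rfl fun k _ => by ring

theorem mul_trigPoly_sub_mul_trigPoly (N : ℕ) (A B C D : ℕ → ℝ) (p q t : ℝ) :
    p * trigPoly N A B t - q * trigPoly N C D t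
      = trigPoly N (fun k => p * A k - q * C k) (fun k => p * B k - q * D k) t := by
  simp only [trigPoly, mul_sum, ← sum_sub_distrib]
  exact sum_congr rfl fun k _ => by ring

end TrigPoly

theorem om_trigPoly (c h : ℝ) (N : ℕ) (A B : ℕ → ℝ) (g : ℝ → ℝ) :
    om c h (trigPoly N A B) g = (∫ t in (0 : ℝ)..2 * π,
      trigPoly N (fun k => th c h k * B k) (fun k => -(th c h k * A k)) t * g t) / (2 * π) := by
  rw [om, ← intervalIntegral.integral_div, deriv_trigPoly, iterate_deriv_three_trigPoly]
  congr with t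
  rw [mul_trigPoly_sub_mul_trigPoly]
  congr 3 <;> funext k <;> simp only [th, Int.cast_natCast] <;> ring

theorem th_pos {c h : ℝ} (hh : 0 < h) (hc : 0 ≤ c) {k : ℕ} (hk : 1 ≤ k) : 0 < th c h k := by
  have hk' : (1 : ℝ) ≤ k := by exact_mod_cast hk
  have hcube : 0 ≤ (k : ℝ) ^ 3 - k := by
    rw [show (k : ℝ) ^ 3 - k = (k - 1) * k * (k + 1) by ring]
    exact mul_nonneg (mul_nonneg (by linarith) (by linarith)) (by linarith)
  simp only [th, Int.cast_natCast]
  positivity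

/-- For a mean-zero vector field `f = Σ_{k≥1} (a_k cos(kt) + b_k sin(kt))` and its image
`Jf = Σ_{k≥1} (b_k cos(kt) - a_k sin(kt))` under the almost complex structure `J`, one has
`ω_{c,h}(f, Jf) = (1/2) Σ_{k≥1} θ_k (a_k² + b_k²)`; moreover if `h > 0` and `c ≥ 0` then
`B(f,g) = ω_{c,h}(f, Jg)` is positive definite on the mean-zero vector fields. -/
theorem om_f_Jf (c h : ℝ) (N : ℕ) (a b : ℕ → ℝ) (f Jf : ℝ → ℝ)
    (hf : f = fun t => ∑ k ∈ Finset.Icc 1 N, (a k * Real.cos (k * t) + b k * Real.sin (k * t)))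
    (hJf : Jf = fun t => ∑ k ∈ Finset.Icc 1 N, (b k * Real.cos (k * t) - a k * Real.sin (k * t))) :
    om c h f Jf = (1/2) * ∑ k ∈ Finset.Icc 1 N, th c h k * (a k ^ 2 + b k ^ 2) ∧
    (0 < h → 0 ≤ c → (∃ k ∈ Finset.Icc 1 N, a k ≠ 0 ∨ b k ≠ 0) → 0 < om c h f Jf) := by
  obtain rfl : f = trigPoly N a b := hf
  obtain rfl : Jf = trigPoly N b (fun k => -a k) := by
    rw [hJf]
    funext t
    simp only [trigPoly, sub_eq_add_neg, neg_mul]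
  have hom : om c h (trigPoly N a b) (trigPoly N b (fun k => -a k))
      = (1/2) * ∑ k ∈ Finset.Icc 1 N, th c h k * (a k ^ 2 + b k ^ 2) := by
    rw [om_trigPoly, integral_trigPoly_mul_trigPoly,
      Finset.sum_congr rfl fun (k : ℕ) _ => show th c h k * b k * b k + -(th c h k * a k) * -a k
        = th c h k * (a k ^ 2 + b k ^ 2) by ring]
    field_simp
  refine ⟨hom, fun hh hc ⟨k, hk, hab⟩ => ?_⟩
  have hterm : ∀ j ∈ Finset.Icc 1 N, 0 ≤ th c h j * (a j ^ 2 + b j ^ 2) := fun j hj =>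
    mul_nonneg (th_pos hh hc (Finset.mem_Icc.1 hj).1).le (by positivity)
  have hk_pos : 0 < th c h k * (a k ^ 2 + b k ^ 2) :=
    mul_pos (th_pos hh hc (Finset.mem_Icc.1 hk).1) (by rcases hab with hab | hab <;> positivity)
  rw [hom]
  exact mul_pos one_half_pos (Finset.sum_pos' hterm ⟨k, hk, hk_pos⟩)
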